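/- arXiv:2510.10898 — 4 statements merged into one kernel-verified Lean document; each statement's English description precedes it below -/
import Mathlib

section
/- Let α ∈ (0,2) and p ∈ (0,1) with αp < 1. Then ((1−p)/p)·Σ_{k=1}^∞ k^α·B(k, 1+1/p) = ∫_0^{1−p} f(x) dx, where f(x) = Σ_{k=1}^∞ k^α·(1−(x/(1−p))^p)^{k−1}·(x/(1−p))^p for x ∈ [0, 1−p), both sides being finite. -/
open MeasureTheory Filter Finset Topology

/-- The Beta function `B(a,b) = ∫_0^1 x^(a-1) (1-x)^(b-1) dx`. -/
noncomputable def Beta (a b : ℝ) : ℝ :=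
  ∫ x in (0:ℝ)..1, x ^ (a - 1) * (1 - x) ^ (b - 1)

/-!
With `q = (x/(1-p))^p`, the `k`-th term of `f(x)` is `(k+1)^α (1-q)^k q`. Scaling `x = (1-p) u`
and substituting `u = v^(1/p)` turns its integral over `[0, 1-p]` into
`(1-p)/p · (k+1)^α B(k+1, 1+1/p)`. Summation and integration commute by dominated convergence:
comparing `(k+1)^α` with a rising factorial gives `f(x) ≤ C q^(-α) = C (x/(1-p))^(-αp)`, which is
integrable on `[0, 1-p]` because `αp < 1`.
-/

open scoped Nat

lemma Real.rpow_le_one_add_pow {x α : ℝ} {m : ℕ} (hx : 0 ≤ x) (hα : 0 ≤ α)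
    (hαm : α ≤ m) :
    x ^ α ≤ 1 + x ^ m := by
  rcases le_or_gt x 1 with hx1 | hx1
  · linarith [Real.rpow_le_one hx hx1 hα, pow_nonneg hx m]
  · have h := Real.rpow_le_rpow_of_exponent_le hx1.le hαm
    rw [Real.rpow_natCast] at h
    linarith

lemma natCast_add_one_pow_le_factorial_mul_choose (k m : ℕ) :
    ((k : ℝ) + 1) ^ m ≤ m ! * (k + m).choose m := by
  exact_mod_cast (Nat.pow_succ_le_ascFactorial (k + 1) m).trans
    (Nat.ascFactorial_eq_factorial_mul_choose k m).le

/-- `(k+1)^α` is compared with the rising factorial `(k+1)⋯(k+m)`, `m = ⌈α⌉`, whose generating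
function is `m! / (1-s)^(m+1)`. -/
lemma summable_and_tsum_rpow_mul_geometric_le {α s : ℝ} (hα : 0 ≤ α) (hs0 : 0 ≤ s)
    (hs1 : s < 1) :
    Summable (fun k : ℕ => ((k : ℝ) + 1) ^ α * s ^ k) ∧
      ∑' k : ℕ, ((k : ℝ) + 1) ^ α * s ^ k ≤ (1 + ⌈α⌉₊ !) * (1 - s) ^ (-(α + 1)) := by
  set m := ⌈α⌉₊
  set t := 1 - s
  have ht : 0 < t := sub_pos.2 hs1
  have hgeom : HasSum (fun k : ℕ => s ^ k) t⁻¹ := hasSum_geometric_of_lt_one hs0 hs1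
  have hrising := (hasSum_choose_mul_geometric_of_norm_lt_one m (r := s)
    (by rwa [Real.norm_eq_abs, abs_of_nonneg hs0])).mul_left (m ! : ℝ)
  have hdom := (hgeom.add (hrising.mul_left (t ^ m))).mul_left (t ^ (-α))
  have hvalue : t ^ (-α) * (t⁻¹ + t ^ m * (m ! * (1 / t ^ (m + 1)))) =
      (1 + m !) * t ^ (-(α + 1)) := by
    rw [show -(α + 1) = -α + -1 by ring, Real.rpow_add ht, Real.rpow_neg_one]
    field_simp
    ring
  rw [hvalue] at hdom
  have hle : ∀ k : ℕ, ((k : ℝ) + 1) ^ α * s ^ k ≤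
      t ^ (-α) * (s ^ k + t ^ m * (m ! * ((k + m).choose m * s ^ k))) := by
    intro k
    have hk : (0 : ℝ) ≤ (k : ℝ) + 1 := by positivity
    have hsplit : ((k : ℝ) + 1) ^ α = t ^ (-α) * (t * ((k : ℝ) + 1)) ^ α := by
      rw [Real.mul_rpow ht.le hk, ← mul_assoc, ← Real.rpow_add ht, neg_add_cancel,
        Real.rpow_zero, one_mul]
    have hpow : (t * ((k : ℝ) + 1)) ^ α ≤ 1 + t ^ m * (m ! * (k + m).choose m) := by
      calc (t * ((k : ℝ) + 1)) ^ α ≤ 1 + (t * ((k : ℝ) + 1)) ^ m :=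
            Real.rpow_le_one_add_pow (by positivity) hα (Nat.le_ceil α)
        _ ≤ 1 + t ^ m * (m ! * (k + m).choose m) := by
            rw [mul_pow]
            gcongr
            exact natCast_add_one_pow_le_factorial_mul_choose k m
    rw [hsplit]
    calc t ^ (-α) * (t * ((k : ℝ) + 1)) ^ α * s ^ k
        ≤ t ^ (-α) * (1 + t ^ m * (m ! * (k + m).choose m)) * s ^ k := by gcongr
      _ = _ := by ring
  have hnonneg : ∀ k : ℕ, 0 ≤ ((k : ℝ) + 1) ^ α * s ^ k := fun k => by positivity
  have hsum := Summable.of_nonneg_of_le hnonneg hle hdom.summable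
  exact ⟨hsum, hdom.tsum_eq ▸ hsum.tsum_le_tsum hle hdom.summable⟩

lemma Beta_comm (a b : ℝ) : Beta a b = Beta b a := by
  have h := intervalIntegral.integral_comp_sub_left
    (fun x : ℝ => x ^ (b - 1) * (1 - x) ^ (a - 1)) (a := 0) (b := 1) 1
  rw [sub_zero, sub_self] at h
  simp_rw [sub_sub_cancel] at h
  rw [Beta, Beta, ← h]
  simp_rw [mul_comm]

lemma Beta_natCast_add_one (k : ℕ) (b : ℝ) :
    Beta (k + 1) b = ∫ v in (0:ℝ)..1, (1 - v) ^ k * v ^ (b - 1) := by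
  rw [Beta_comm, Beta, add_sub_cancel_right]
  simp_rw [Real.rpow_natCast, mul_comm]

/-- The substitution `u = v ^ (1/p)`; its Jacobian `v ^ (1/p - 1) / p` is continuous since
`p ≤ 1`. -/
lemma integral_one_sub_rpow_pow_mul_rpow {p : ℝ} (hp : 0 < p) (hp1 : p ≤ 1) (k : ℕ) :
    ∫ u in (0:ℝ)..1, (1 - u ^ p) ^ k * u ^ p = Beta (k + 1) (1 + 1 / p) / p := by
  have hderiv : ∀ v ∈ Set.uIcc (0:ℝ) 1,
      HasDerivAt (fun v : ℝ => v ^ (1 / p)) (1 / p * v ^ (1 / p - 1)) v :=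
    fun v _ => Real.hasDerivAt_rpow_const (Or.inr (one_le_one_div hp hp1))
  have hjac : ContinuousOn (fun v : ℝ => 1 / p * v ^ (1 / p - 1)) (Set.uIcc 0 1) :=
    (continuous_const.mul (Real.continuous_rpow_const
      (sub_nonneg.2 (one_le_one_div hp hp1)))).continuousOn
  have hcont : Continuous fun u : ℝ => (1 - u ^ p) ^ k * u ^ p := by
    have := Real.continuous_rpow_const hp.le
    fun_prop
  have hsubst := intervalIntegral.integral_comp_mul_deriv hderiv hjac hcont
  rw [Real.zero_rpow (one_div_ne_zero hp.ne'), Real.one_rpow] at hsubst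
  rw [← hsubst, Beta_natCast_add_one, add_sub_cancel_left, ← intervalIntegral.integral_div]
  refine intervalIntegral.integral_congr fun v hv => ?_
  have hv0 : 0 ≤ v := (Set.uIcc_of_le (zero_le_one' ℝ) ▸ hv).1
  have hvp : (v ^ (1 / p)) ^ p = v := by
    rw [← Real.rpow_mul hv0, one_div_mul_cancel hp.ne', Real.rpow_one]
  have hvsplit : v ^ (1 / p) = v * v ^ (1 / p - 1) := by
    conv_lhs => rw [show 1 / p = 1 + (1 / p - 1) by ring]
    rw [Real.rpow_add' hv0 (by rw [add_sub_cancel]; positivity), Real.rpow_one]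
  simp only [Function.comp, hvp]
  rw [hvsplit]
  ring

/-- `(k+1)^α` times the probability that a geometric variable of parameter `q` equals `k+1`. -/
noncomputable def geomTerm (α q : ℝ) (k : ℕ) : ℝ := ((k + 1 : ℝ)) ^ α * (1 - q) ^ k * q

section GeomTerm

variable {α q : ℝ}

lemma geomTerm_nonneg (hq0 : 0 ≤ q) (hq1 : q ≤ 1) (k : ℕ) : 0 ≤ geomTerm α q k := by
  have : 0 ≤ 1 - q := sub_nonneg.2 hq1
  unfold geomTerm
  positivity

lemma summable_geomTerm (hα : 0 ≤ α) (hq0 : 0 ≤ q) (hq1 : q ≤ 1) :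
    Summable (geomTerm α q) := by
  rcases hq0.eq_or_lt with rfl | hq
  · exact summable_zero.congr fun k => by simp [geomTerm]
  exact (summable_and_tsum_rpow_mul_geometric_le hα (sub_nonneg.2 hq1)
    (sub_lt_self 1 hq)).1.mul_right q

lemma tsum_geomTerm_le (hα : 0 ≤ α) (hq0 : 0 < q) (hq1 : q ≤ 1) :
    ∑' k, geomTerm α q k ≤ (1 + ⌈α⌉₊ !) * q ^ (-α) := by
  have hbound := (summable_and_tsum_rpow_mul_geometric_le hα (sub_nonneg.2 hq1)
    (sub_lt_self 1 hq0)).2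
  rw [sub_sub_cancel] at hbound
  calc ∑' k, geomTerm α q k = (∑' k : ℕ, ((k : ℝ) + 1) ^ α * (1 - q) ^ k) * q :=
        tsum_mul_right
    _ ≤ (1 + ⌈α⌉₊ !) * q ^ (-(α + 1)) * q := by gcongr
    _ = (1 + ⌈α⌉₊ !) * q ^ (-α) := by
      rw [mul_assoc, ← Real.rpow_add_one hq0.ne', neg_add, neg_add_cancel_right]

end GeomTerm

section Rescaled

variable {α p c : ℝ}

lemma div_rpow_mem_Ioc {x : ℝ} (hc : 0 < c) (hx : x ∈ Set.Ioc 0 c) (hp : 0 ≤ p) :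
    (x / c) ^ p ∈ Set.Ioc 0 1 :=
  ⟨Real.rpow_pos_of_pos (div_pos hx.1 hc) p,
    Real.rpow_le_one (div_nonneg hx.1.le hc.le) ((div_le_one hc).2 hx.2) hp⟩

lemma continuous_geomTerm_div_rpow (hp : 0 ≤ p) (k : ℕ) :
    Continuous fun x => geomTerm α ((x / c) ^ p) k := by
  have := Real.continuous_rpow_const hp
  unfold geomTerm
  fun_prop

lemma integral_geomTerm_div_rpow (hc : 0 < c) (hp : 0 < p) (hp1 : p ≤ 1) (k : ℕ) :
    ∫ x in (0:ℝ)..c, geomTerm α ((x / c) ^ p) k =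
      c / p * (((k : ℝ) + 1) ^ α * Beta (k + 1) (1 + 1 / p)) := by
  simp only [geomTerm, mul_assoc]
  rw [intervalIntegral.integral_const_mul,
    intervalIntegral.integral_comp_div (fun u => (1 - u ^ p) ^ k * u ^ p) hc.ne', zero_div,
    div_self hc.ne', integral_one_sub_rpow_pow_mul_rpow hp hp1, smul_eq_mul]
  ring

lemma intervalIntegrable_div_rpow {r : ℝ} (hr : -1 < r) :
    IntervalIntegrable (fun x => (x / c) ^ r) volume 0 c := by
  have h := (intervalIntegral.intervalIntegrable_rpow' hr (a := 0) (b := 1)).comp_mul_right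
    (c := c⁻¹)
  rw [zero_div, one_div, inv_inv] at h
  simpa only [div_eq_mul_inv] using h

lemma tsum_geomTerm_div_rpow_le (hα : 0 ≤ α) (hc : 0 < c) (hp : 0 ≤ p) {x : ℝ}
    (hx : x ∈ Set.Ioc 0 c) :
    ∑' k, geomTerm α ((x / c) ^ p) k ≤ (1 + ⌈α⌉₊ !) * (x / c) ^ (-(α * p)) := by
  obtain ⟨hq0, hq1⟩ := div_rpow_mem_Ioc hc hx hp
  rw [show -(α * p) = p * -α by ring, Real.rpow_mul (div_nonneg hx.1.le hc.le)]
  exact tsum_geomTerm_le hα hq0 hq1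

lemma intervalIntegrable_tsum_geomTerm_div_rpow (hα : 0 ≤ α) (hc : 0 < c) (hp : 0 ≤ p)
    (hαp : α * p < 1) :
    IntervalIntegrable (fun x => ∑' k, geomTerm α ((x / c) ^ p) k) volume 0 c := by
  refine ((intervalIntegrable_div_rpow (neg_lt_neg hαp)).const_mul
    (1 + ⌈α⌉₊ ! : ℝ)).mono_fun' ?_ ?_
  · exact (Measurable.tsum fun k =>
      (continuous_geomTerm_div_rpow hp k).measurable).aestronglyMeasurable
  · rw [Set.uIoc_of_le hc.le]
    filter_upwards [ae_restrict_mem measurableSet_Ioc] with x hx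
    obtain ⟨hq0, hq1⟩ := div_rpow_mem_Ioc hc hx hp
    rw [Real.norm_of_nonneg (tsum_nonneg (geomTerm_nonneg hq0.le hq1))]
    exact tsum_geomTerm_div_rpow_le hα hc hp hx

lemma hasSum_integral_geomTerm_div_rpow (hα : 0 ≤ α) (hc : 0 < c) (hp : 0 ≤ p)
    (hαp : α * p < 1) :
    HasSum (fun k => ∫ x in (0:ℝ)..c, geomTerm α ((x / c) ^ p) k)
      (∫ x in (0:ℝ)..c, ∑' k, geomTerm α ((x / c) ^ p) k) := by
  have hq : ∀ x ∈ Set.uIoc 0 c, (x / c) ^ p ∈ Set.Ioc 0 1 := fun x hx =>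
    div_rpow_mem_Ioc hc (Set.uIoc_of_le hc.le ▸ hx) hp
  refine intervalIntegral.hasSum_integral_of_dominated_convergence
    (fun k x => geomTerm α ((x / c) ^ p) k)
    (fun k => (continuous_geomTerm_div_rpow hp k).aestronglyMeasurable)
    (fun k => ae_of_all _ fun x hx => ?_)
    (ae_of_all _ fun x hx => summable_geomTerm hα (hq x hx).1.le (hq x hx).2)
    (intervalIntegrable_tsum_geomTerm_div_rpow hα hc hp hαp)
    (ae_of_all _ fun x hx => (summable_geomTerm hα (hq x hx).1.le (hq x hx).2).hasSum)
  exact (Real.norm_of_nonneg (geomTerm_nonneg (hq x hx).1.le (hq x hx).2 k)).le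

end Rescaled

theorem stmt3_general (α p : ℝ) (hα : 0 < α) (hp : 0 < p) (hp1 : p < 1)
    (hap : α * p < 1) :
    Summable (fun k : ℕ => ((k + 1 : ℝ)) ^ α * Beta (k+1) (1 + 1/p)) ∧
    (∀ x, 0 ≤ x → x < 1 - p →
      Summable (fun k : ℕ =>
        ((k + 1 : ℝ)) ^ α * (1 - (x/(1-p)) ^ p) ^ k * (x/(1-p)) ^ p)) ∧
    IntervalIntegrable
      (fun x => ∑' k : ℕ,
        ((k + 1 : ℝ)) ^ α * (1 - (x/(1-p)) ^ p) ^ k * (x/(1-p)) ^ p)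
      volume 0 (1-p) ∧
    (1 - p)/p * ∑' k : ℕ, ((k + 1 : ℝ)) ^ α * Beta (k+1) (1 + 1/p)
      = ∫ x in (0:ℝ)..(1-p), ∑' k : ℕ,
          ((k + 1 : ℝ)) ^ α * (1 - (x/(1-p)) ^ p) ^ k * (x/(1-p)) ^ p := by
  have hc : 0 < 1 - p := sub_pos.2 hp1
  have hsum := hasSum_integral_geomTerm_div_rpow hα.le hc hp.le hap
  simp only [integral_geomTerm_div_rpow hc hp hp1.le] at hsum
  refine ⟨(summable_mul_left_iff (div_pos hc hp).ne').1 hsum.summable,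
    fun x hx0 hx1 => summable_geomTerm hα.le ?_ ?_,
    intervalIntegrable_tsum_geomTerm_div_rpow hα.le hc hp.le hap,
    tsum_mul_left.symm.trans hsum.tsum_eq⟩
  · positivity
  · exact Real.rpow_le_one (by positivity) ((div_le_one hc).2 hx1.le) hp.le

theorem stmt3 (α p : ℝ) (hα : 0 < α) (hα2 : α < 2) (hp : 0 < p) (hp1 : p < 1)
    (hap : α * p < 1) :
    Summable (fun k : ℕ => ((k + 1 : ℝ)) ^ α * Beta (k+1) (1 + 1/p)) ∧
    (∀ x, 0 ≤ x → x < 1 - p →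
      Summable (fun k : ℕ =>
        ((k + 1 : ℝ)) ^ α * (1 - (x/(1-p)) ^ p) ^ k * (x/(1-p)) ^ p)) ∧
    IntervalIntegrable
      (fun x => ∑' k : ℕ,
        ((k + 1 : ℝ)) ^ α * (1 - (x/(1-p)) ^ p) ^ k * (x/(1-p)) ^ p)
      volume 0 (1-p) ∧
    (1 - p)/p * ∑' k : ℕ, ((k + 1 : ℝ)) ^ α * Beta (k+1) (1 + 1/p)
      = ∫ x in (0:ℝ)..(1-p), ∑' k : ℕ,
          ((k + 1 : ℝ)) ^ α * (1 - (x/(1-p)) ^ p) ^ k * (x/(1-p)) ^ p :=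
  stmt3_general α p hα hp hp1 hap
end

section
/- Suppose (ξ_k)_{k≥1} are i.i.d. standard normal random variables independent of the weights. If (1/√n)·Σ_{k=1}^n W_{nk}·ξ_k converges in distribution to the standard normal law N(0,1), then (1/n)·Σ_{k=1}^n W_{nk}^2 → 1 in probability. -/
open MeasureTheory ProbabilityTheory Filter Finset Topology ENNReal

/-!
Conditionally on the weights, `Sₙ = n^{-1/2} ∑ₖ Wₙₖ ξₖ` is centred Gaussian with variance
`Vₙ = n⁻¹ ∑ₖ Wₙₖ²`, so `E cos (t Sₙ) = E exp (-t² Vₙ / 2)`. Convergence of `Sₙ` in distribution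
to `N(0,1)` therefore gives `E exp (-r Vₙ) → exp (-r)` for every `r ≥ 0`. For `r = 1/2` and
`r = 1` these are the first two moments of `Yₙ = exp (-Vₙ / 2)`, which thus converges to the
constant `exp (-1/2)` in `L²`, hence in probability; since `v ↦ exp (-v / 2)` is strictly
decreasing, `Vₙ → 1` in probability.
-/

/-- Convergence in distribution (weak convergence of the laws). -/
def TendstoInDistribution {Ω : Type*} [MeasurableSpace Ω] (P : Measure Ω)
    (f : ℕ → Ω → ℝ) (μ : Measure ℝ) : Prop :=
  ∀ g : BoundedContinuousFunction ℝ ℝ,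
    Tendsto (fun n => ∫ ω, g (f n ω) ∂P) atTop (𝓝 (∫ x, g x ∂μ))

section

variable {Ω : Type*} [MeasurableSpace Ω] {P : Measure Ω}

lemma re_charFun_map [IsFiniteMeasure P] {X : Ω → ℝ} (hX : AEMeasurable X P) (t : ℝ) :
    (charFun (P.map X) t).re = ∫ ω, Real.cos (t * X ω) ∂P := by
  have hint : Integrable (fun x : ℝ => Complex.exp (t * x * Complex.I)) (P.map X) :=
    Integrable.of_bound (by fun_prop) 1 (ae_of_all _ fun x => by
      rw [← Complex.ofReal_mul, Complex.norm_exp_ofReal_mul_I])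
  have hre := integral_re hint
  simp only [RCLike.re_to_complex] at hre
  rw [charFun_apply_real, ← hre, integral_map hX (by fun_prop)]
  simp only [← Complex.ofReal_mul, Complex.exp_ofReal_mul_I_re]

lemma charFun_gaussianReal_zero (v : NNReal) (t : ℝ) :
    charFun (gaussianReal 0 v) t = (Real.exp (-(v * t ^ 2 / 2)) : ℂ) := by
  rw [charFun_gaussianReal, Complex.ofReal_exp]
  push_cast
  ring_nf

lemma integral_cos_mul_gaussianReal (v : NNReal) (t : ℝ) :
    ∫ x, Real.cos (t * x) ∂gaussianReal 0 v = Real.exp (-(v * t ^ 2 / 2)) := by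
  have h := re_charFun_map (P := gaussianReal 0 v) aemeasurable_id t
  rwa [Measure.map_id, charFun_gaussianReal_zero, Complex.ofReal_re, eq_comm] at h

lemma integral_cos_sum_mul_of_iIndepFun [IsProbabilityMeasure P] {ξ : ℕ → Ω → ℝ}
    (hmξ : ∀ k, Measurable (ξ k)) (hξindep : iIndepFun ξ P)
    (hξgauss : ∀ k, P.map (ξ k) = gaussianReal 0 1) (a : ℕ → ℝ) (s : Finset ℕ) :
    ∫ ω, Real.cos (∑ k ∈ s, a k * ξ k ω) ∂P = Real.exp (-(∑ k ∈ s, a k ^ 2) / 2) := by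
  have hchar : charFun (P.map fun ω => ∑ k ∈ s, a k * ξ k ω) 1
      = ∏ k ∈ s, charFun (gaussianReal 0 1) (a k) := by
    rw [iIndepFun.charFun_map_fun_finsetSum_eq_prod (X := fun k ω => a k * ξ k ω)
      (fun k _ => ((hmξ k).const_mul _).aemeasurable)
      ((hξindep.comp _ fun k => measurable_const_mul (a k)).restrict s), Finset.prod_apply]
    refine Finset.prod_congr rfl fun k _ => ?_
    rw [charFun_map_mul_comp (hmξ k).aemeasurable, hξgauss, mul_one]
  have hre := re_charFun_map (by fun_prop) 1 (P := P) (X := fun ω => ∑ k ∈ s, a k * ξ k ω)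
  simp only [one_mul] at hre
  rw [← hre, hchar]
  simp_rw [charFun_gaussianReal_zero]
  rw [← Complex.ofReal_prod, Complex.ofReal_re, ← Real.exp_sum]
  simp only [NNReal.coe_one, one_mul, neg_div, sum_div, sum_neg_distrib]

lemma indepFun_pi_of_indep_iSup {ι κ κ' β γ : Type*} [MeasurableSpace β] [MeasurableSpace γ]
    {W : ι → κ → Ω → β} {ξ : κ' → Ω → γ}
    (h : Indep (⨆ n, ⨆ k, MeasurableSpace.comap (W n k) inferInstance)
      (⨆ k, MeasurableSpace.comap (ξ k) inferInstance) P) (n : ι) :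
    IndepFun (fun ω k => W n k ω) (fun ω k => ξ k ω) P := by
  rw [IndepFun_iff_Indep, MeasurableSpace.comap_process_pi, MeasurableSpace.comap_process_pi]
  exact indep_of_indep_of_le_left h
    (le_iSup (fun m => ⨆ k, MeasurableSpace.comap (W m k) inferInstance) n)

lemma ProbabilityTheory.IndepFun.integral_comp_prodMk {α β E : Type*} [MeasurableSpace α]
    [MeasurableSpace β] [NormedAddCommGroup E] [NormedSpace ℝ E] [IsFiniteMeasure P]
    {A : Ω → α} {B : Ω → β} (hA : AEMeasurable A P) (hB : AEMeasurable B P)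
    (hAB : IndepFun A B P) {F : α × β → E}
    (hF : Integrable F ((P.map A).prod (P.map B))) :
    ∫ ω, F (A ω, B ω) ∂P = ∫ ω, ∫ ω', F (A ω, B ω') ∂P ∂P := by
  have hmap : P.map (fun ω => (A ω, B ω)) = (P.map A).prod (P.map B) :=
    (indepFun_iff_map_prod_eq_prod_map_map hA hB).mp hAB
  rw [← integral_map (hA.prodMk hB) (hmap ▸ hF.aestronglyMeasurable), hmap, integral_prod F hF,
    integral_map hA hF.integral_prod_left.aestronglyMeasurable]
  refine integral_congr_ae ?_
  filter_upwards [ae_of_ae_map hA hF.prod_right_ae] with ω hω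
  exact integral_map hB hω.aestronglyMeasurable

lemma integral_cos_mul_sum_mul_of_indepFun [IsProbabilityMeasure P] {ξ A : ℕ → Ω → ℝ}
    (hmξ : ∀ k, Measurable (ξ k)) (hmA : ∀ k, Measurable (A k)) (hξindep : iIndepFun ξ P)
    (hξgauss : ∀ k, P.map (ξ k) = gaussianReal 0 1)
    (hAξ : IndepFun (fun ω k => A k ω) (fun ω k => ξ k ω) P) (t : ℝ) (s : Finset ℕ) :
    ∫ ω, Real.cos (t * ∑ k ∈ s, A k ω * ξ k ω) ∂P
      = ∫ ω, Real.exp (-(t ^ 2 / 2) * ∑ k ∈ s, A k ω ^ 2) ∂P := by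
  let F : (ℕ → ℝ) × (ℕ → ℝ) → ℝ := fun p => Real.cos (t * ∑ k ∈ s, p.1 k * p.2 k)
  have hF : Integrable F ((P.map fun ω k => A k ω).prod (P.map fun ω k => ξ k ω)) :=
    Integrable.of_bound (by fun_prop) 1 (ae_of_all _ fun p => Real.abs_cos_le_one _)
  rw [hAξ.integral_comp_prodMk (measurable_pi_lambda _ hmA).aemeasurable
    (measurable_pi_lambda _ hmξ).aemeasurable hF]
  refine integral_congr_ae (ae_of_all _ fun ω => ?_)
  simp only [F, mul_sum, ← mul_assoc]
  rw [integral_cos_sum_mul_of_iIndepFun hmξ hξindep hξgauss (fun k => t * A k ω) s]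
  congr 1
  simp only [mul_pow, ← mul_sum]
  ring

lemma tendstoInMeasure_const_of_tendsto_integral_sq_sub [IsFiniteMeasure P] {ι : Type*}
    {l : Filter ι} {X : ι → Ω → ℝ} {c : ℝ} (hX : ∀ i, MemLp (X i) 2 P)
    (h : Tendsto (fun i => ∫ ω, (X i ω - c) ^ 2 ∂P) l (𝓝 0)) :
    TendstoInMeasure P X l (fun _ => c) := by
  refine tendstoInMeasure_of_tendsto_eLpNorm two_ne_zero (fun i => (hX i).aestronglyMeasurable)
    aestronglyMeasurable_const ?_
  have hnorm : ∀ i, eLpNorm (X i - fun _ => c) 2 P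
      = ENNReal.ofReal ((∫ ω, (X i ω - c) ^ 2 ∂P) ^ (2⁻¹ : ℝ)) := fun i => by
    rw [((hX i).sub (memLp_const c)).eLpNorm_eq_integral_rpow_norm two_ne_zero ofNat_ne_top]
    simp [Real.norm_eq_abs, sq_abs]
  simp_rw [hnorm]
  rw [← ENNReal.ofReal_zero, ← Real.zero_rpow (inv_ne_zero two_ne_zero)]
  exact ENNReal.tendsto_ofReal (h.rpow_const (Or.inr (by norm_num)))

lemma tendstoInMeasure_const_of_tendsto_moments [IsProbabilityMeasure P] {ι : Type*}
    {l : Filter ι} {X : ι → Ω → ℝ} {c : ℝ} (hX : ∀ i, MemLp (X i) 2 P)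
    (h1 : Tendsto (fun i => ∫ ω, X i ω ∂P) l (𝓝 c))
    (h2 : Tendsto (fun i => ∫ ω, X i ω ^ 2 ∂P) l (𝓝 (c ^ 2))) :
    TendstoInMeasure P X l (fun _ => c) := by
  refine tendstoInMeasure_const_of_tendsto_integral_sq_sub hX ?_
  have hexpand : ∀ i, ∫ ω, (X i ω - c) ^ 2 ∂P
      = ∫ ω, X i ω ^ 2 ∂P - 2 * c * ∫ ω, X i ω ∂P + c ^ 2 := fun i => by
    have hint₁ := ((hX i).integrable one_le_two).const_mul (2 * c)
    have hint₂ := (hX i).integrable_sq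
    calc ∫ ω, (X i ω - c) ^ 2 ∂P = ∫ ω, (X i ω ^ 2 - 2 * c * X i ω) + c ^ 2 ∂P :=
          integral_congr_ae (ae_of_all _ fun ω => by ring)
      _ = _ := by
          rw [integral_add (f := fun ω => X i ω ^ 2 - 2 * c * X i ω) (hint₂.sub hint₁)
              (integrable_const _), integral_sub hint₂ hint₁,
            integral_const_mul, integral_const, probReal_univ, one_smul]
  simp_rw [hexpand]
  convert (h2.sub (h1.const_mul (2 * c))).add_const (c ^ 2) using 2
  ring

lemma MeasureTheory.TendstoInMeasure.of_comp_strictAnti {ι : Type*} {l : Filter ι}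
    {V : ι → Ω → ℝ} {a : ℝ} {f : ℝ → ℝ} (hf : StrictAnti f)
    (h : TendstoInMeasure P (fun i ω => f (V i ω)) l (fun _ => f a)) :
    TendstoInMeasure P V l (fun _ => a) := by
  rw [tendstoInMeasure_iff_dist] at h ⊢
  intro ε hε
  set δ := min (f (a - ε) - f a) (f a - f (a + ε))
  have hδ : 0 < δ := lt_min (sub_pos.2 (hf (by linarith))) (sub_pos.2 (hf (by linarith)))
  refine tendsto_of_tendsto_of_tendsto_of_le_of_le tendsto_const_nhds (h δ hδ)
    (fun _ => zero_le) fun i => measure_mono fun ω hω => ?_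
  simp only [Set.mem_ofPred_eq, Real.dist_eq] at hω ⊢
  rcases le_abs.mp hω with hhigh | hlow
  · have := hf.antitone (by linarith : a + ε ≤ V i ω)
    exact le_abs.mpr (Or.inr (by linarith [min_le_right (f (a - ε) - f a) (f a - f (a + ε))]))
  · have := hf.antitone (by linarith : V i ω ≤ a - ε)
    exact le_abs.mpr (Or.inl (by linarith [min_le_left (f (a - ε) - f a) (f a - f (a + ε))]))

lemma tendsto_integral_exp_neg_mul_mean_sq [IsProbabilityMeasure P] {ξ : ℕ → Ω → ℝ}
    {W : ℕ → ℕ → Ω → ℝ} (hmξ : ∀ k, Measurable (ξ k)) (hmW : ∀ n k, Measurable (W n k))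
    (hξindep : iIndepFun ξ P) (hξgauss : ∀ k, P.map (ξ k) = gaussianReal 0 1)
    (hWξ : ∀ n, IndepFun (fun ω k => W n k ω) (fun ω k => ξ k ω) P)
    (hconv : TendstoInDistribution P
      (fun n ω => (1 / Real.sqrt n) * ∑ k ∈ Icc 1 n, W n k ω * ξ k ω) (gaussianReal 0 1))
    {r : ℝ} (hr : 0 ≤ r) :
    Tendsto (fun n : ℕ => ∫ ω, Real.exp (-r * ((1 / (n : ℝ)) * ∑ k ∈ Icc 1 n, W n k ω ^ 2)) ∂P)
      atTop (𝓝 (Real.exp (-r))) := by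
  set t := Real.sqrt (2 * r)
  have ht : t ^ 2 / 2 = r := by
    rw [Real.sq_sqrt (by positivity)]
    ring
  let g : BoundedContinuousFunction ℝ ℝ := .mkOfBound ⟨fun x => Real.cos (t * x), by fun_prop⟩ 2
    fun x y => (Real.dist_le_of_mem_Icc ⟨Real.neg_one_le_cos _, Real.cos_le_one _⟩
      ⟨Real.neg_one_le_cos _, Real.cos_le_one _⟩).trans_eq (by norm_num)
  have hlim : ∫ x, g x ∂gaussianReal 0 1 = Real.exp (-r) := by
    have h := integral_cos_mul_gaussianReal 1 t
    rwa [NNReal.coe_one, one_mul, ht] at h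
  refine (hlim ▸ hconv g).congr fun n => ?_
  have hscale : (t * (1 / Real.sqrt n)) ^ 2 / 2 = r * (1 / n) := by
    rw [mul_pow, div_pow, one_pow, Real.sq_sqrt (Nat.cast_nonneg _), Real.sq_sqrt (by positivity)]
    ring
  calc ∫ ω, g ((1 / Real.sqrt n) * ∑ k ∈ Icc 1 n, W n k ω * ξ k ω) ∂P
      = ∫ ω, Real.cos (t * (1 / Real.sqrt n) * ∑ k ∈ Icc 1 n, W n k ω * ξ k ω) ∂P := by
        simp only [g, BoundedContinuousFunction.mkOfBound_coe, mul_assoc]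
        rfl
    _ = _ := by
        rw [integral_cos_mul_sum_mul_of_indepFun hmξ (hmW n) hξindep hξgauss (hWξ n), hscale]
        simp only [neg_mul, mul_assoc]

end

theorem stmt5
    {Ω : Type*} [MeasurableSpace Ω] (P : Measure Ω) [IsProbabilityMeasure P]
    (ξ : ℕ → Ω → ℝ) (W : ℕ → ℕ → Ω → ℝ)
    (hmξ : ∀ k, Measurable (ξ k)) (hmW : ∀ n k, Measurable (W n k))
    -- ξ i.i.d. standard normal
    (hξindep : iIndepFun ξ P)
    (hξgauss : ∀ k, Measure.map (ξ k) P = gaussianReal 0 1)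
    -- the weights are independent of (ξ_k)
    (hindep : Indep
      (⨆ n, ⨆ k, MeasurableSpace.comap (W n k) inferInstance)
      (⨆ k, MeasurableSpace.comap (ξ k) inferInstance) P)
    -- convergence in distribution of the normalized weighted sums
    (hconv : TendstoInDistribution P
      (fun n ω => (1 / Real.sqrt n) * ∑ k ∈ Finset.Icc 1 n, W n k ω * ξ k ω)
      (gaussianReal 0 1)) :
    TendstoInMeasure P
      (fun (n : ℕ) ω => (1 / (n : ℝ)) * ∑ k ∈ Finset.Icc 1 n, (W n k ω) ^ 2)
      atTop (fun _ => (1 : ℝ)) := by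
  set V : ℕ → Ω → ℝ := fun n ω => (1 / (n : ℝ)) * ∑ k ∈ Icc 1 n, W n k ω ^ 2
  have hlaplace : ∀ r : ℝ, 0 ≤ r →
      Tendsto (fun n => ∫ ω, Real.exp (-r * V n ω) ∂P) atTop (𝓝 (Real.exp (-r))) :=
    fun r hr => tendsto_integral_exp_neg_mul_mean_sq hmξ hmW hξindep hξgauss
      (indepFun_pi_of_indep_iSup hindep) hconv hr
  have hY : TendstoInMeasure P (fun n ω => Real.exp (-(1 / 2) * V n ω)) atTop
      (fun _ => Real.exp (-(1 / 2))) := by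
    refine tendstoInMeasure_const_of_tendsto_moments (fun n => ?_) (hlaplace _ (by norm_num)) ?_
    · refine MemLp.of_bound (by fun_prop) 1 (ae_of_all _ fun ω => ?_)
      have hV : 0 ≤ V n ω := by positivity
      rw [Real.norm_eq_abs, abs_of_pos (Real.exp_pos _), Real.exp_le_one_iff]
      linarith
    · simp_rw [← Real.exp_nat_mul]
      convert hlaplace 1 zero_le_one using 4 <;> push_cast <;> ring_nf
  have hanti : StrictAnti fun v : ℝ => Real.exp (-(1 / 2) * v) := fun v w hvw =>
    Real.exp_lt_exp.mpr (by linarith)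
  exact TendstoInMeasure.of_comp_strictAnti hanti (by rwa [mul_one])
end

section
/- For every r ∈ [0,1] and every n ≥ 1, E((T_n^0)^2) = Σ_{k=1}^n Π_{j=k}^{n−1} ((j + 4r − 2)/j), where the empty product (k = n) equals 1. In particular, E((T_{n+1}^0)^2) = ((n + 4r − 2)/n)·E((T_n^0)^2) + 1 for all n ≥ 1. -/
open MeasureTheory ProbabilityTheory Filter Finset Topology ENNReal
open scoped Classical

/-!
Since `T⁰ (n + 1) = T⁰ n + X⁰ (n + 1)` and `X⁰ (n + 1) ^ 2 = 1`,
`E[T⁰ (n + 1) ^ 2] = E[T⁰ n ^ 2] + 2 E[T⁰ n X⁰ (n + 1)] + 1`. Independently of the first `n` steps,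
`X⁰ (n + 1)` is a uniformly chosen earlier step `X⁰ k` times a sign of mean `2r - 1`, so
`E[T⁰ n X⁰ (n + 1)] = (2r - 1) / n * Σ_k E[T⁰ n X⁰ k] = (2r - 1) / n * E[T⁰ n ^ 2]`.
This is the recursion; unrolling it from `E[T⁰ 1 ^ 2] = 1` gives the closed form.
-/

theorem ProbabilityTheory.iIndep.sumElim {Ω ι κ : Type*} {_mΩ : MeasurableSpace Ω}
    {μ : Measure Ω} {m₁ : ι → MeasurableSpace Ω} {m₂ : κ → MeasurableSpace Ω}
    (h₁ : iIndep m₁ μ) (h₂ : iIndep m₂ μ) (h : Indep (⨆ i, m₁ i) (⨆ j, m₂ j) μ) :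
    iIndep (Sum.elim m₁ m₂) μ := by
  rw [iIndep_iff]
  intro s f hf
  rw [← toLeft_disjSum_toRight (u := s)] at hf ⊢
  have hs₁ : MeasurableSet[⨆ i, m₁ i] (⋂ i ∈ s.toLeft, f (.inl i)) :=
    .biInter s.toLeft.countable_toSet fun i hi ↦
      le_iSup m₁ i _ (hf (.inl i) (inl_mem_disjSum.2 hi))
  have hs₂ : MeasurableSet[⨆ j, m₂ j] (⋂ j ∈ s.toRight, f (.inr j)) :=
    .biInter s.toRight.countable_toSet fun j hj ↦
      le_iSup m₂ j _ (hf (.inr j) (inr_mem_disjSum.2 hj))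
  have hinter : ⋂ p ∈ s.toLeft.disjSum s.toRight, f p
      = (⋂ i ∈ s.toLeft, f (.inl i)) ∩ ⋂ j ∈ s.toRight, f (.inr j) := by
    ext ω; simp [Sum.forall]
  rw [hinter, (Indep_iff _ _ _).1 h _ _ hs₁ hs₂, prod_disjSum,
    h₁.meas_biInter fun i hi ↦ hf (.inl i) (inl_mem_disjSum.2 hi),
    h₂.meas_biInter fun j hj ↦ hf (.inr j) (inr_mem_disjSum.2 hj)]

theorem Finset.sum_prod_Icc_of_succ_eq_mul_add_one {R : Type*} [CommSemiring R] {a c : ℕ → R}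
    (h₁ : a 1 = 1) (hsucc : ∀ n, 1 ≤ n → a (n + 1) = c n * a n + 1) :
    ∀ n, 1 ≤ n → a n = ∑ k ∈ Icc 1 n, ∏ j ∈ Icc k (n - 1), c j := by
  intro n hn
  induction n, hn using Nat.le_induction with
  | base => simp [h₁]
  | succ n hn ih =>
    rw [hsucc n hn, ih, Nat.add_sub_cancel, sum_Icc_succ_top (by omega),
      Icc_eq_empty (show ¬n + 1 ≤ n by omega), prod_empty, mul_sum]
    congr 1
    refine sum_congr rfl fun k hk ↦ ?_
    obtain ⟨m, rfl⟩ : ∃ m, n = m + 1 := ⟨n - 1, by omega⟩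
    rw [Nat.add_sub_cancel, prod_Icc_succ_top (by simp at hk; omega), mul_comm]

theorem MeasureTheory.ae_mem_of_measure_eq_inv_card {Ω α : Type*} [MeasurableSpace Ω]
    [MeasurableSpace α] [MeasurableSingletonClass α] {P : Measure Ω} [IsProbabilityMeasure P]
    {V : Ω → α} (hV : Measurable V) {s : Finset α} (hs : s.Nonempty)
    (hunif : ∀ a ∈ s, P {ω | V ω = a} = (#s : ℝ≥0∞)⁻¹) : ∀ᵐ ω ∂P, V ω ∈ s := by
  have hmeas : P (V ⁻¹' s) = 1 := by
    rw [← sum_measure_preimage_singleton s fun a _ ↦ hV (measurableSet_singleton a)]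
    simp only [Set.preimage, Set.mem_singleton_iff]
    rw [sum_congr rfl hunif, sum_const, nsmul_eq_mul,
      ENNReal.mul_inv_cancel (by simpa using hs.ne_empty) (natCast_ne_top _)]
  exact (mem_ae_iff_prob_eq_one (hV s.measurableSet)).2 hmeas

namespace ElephantRandomWalk

def boolSign (b : Bool) : ℝ := if b then 1 else -1

@[simp] lemma abs_boolSign (b : Bool) : |boolSign b| = 1 := by cases b <;> simp [boolSign]

lemma measurable_boolSign : Measurable boolSign := measurable_of_countable _

section Integrals

variable {Ω : Type*} [MeasurableSpace Ω] {P : Measure Ω}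

lemma integral_boolSign_mul_eq_sum {V : Ω → ℕ} {b : Ω → Bool} (hV : Measurable V)
    (hb : Measurable b) {s : Finset ℕ} (hVs : ∀ᵐ ω ∂P, V ω ∈ s) {W : ℕ → Ω → ℝ}
    (hW : ∀ k, Integrable (W k) P) (hind : ∀ k ∈ s, IndepFun (fun ω ↦ (V ω, b ω)) (W k) P) :
    ∫ ω, boolSign (b ω) * W (V ω) ω ∂P
      = ∑ k ∈ s, (∫ ω, (if V ω = k then 1 else 0) * boolSign (b ω) ∂P) * ∫ ω, W k ω ∂P := by
  set Z : ℕ → Ω → ℝ := fun k ω ↦ (if V ω = k then 1 else 0) * boolSign (b ω) with hZ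
  set ψ : ℕ → ℕ × Bool → ℝ := fun k p ↦ (if p.1 = k then 1 else 0) * boolSign p.2
  have hψ : ∀ k, Measurable (ψ k) := fun k ↦ measurable_of_countable _
  have hZ_ae : ∀ k, AEStronglyMeasurable (Z k) P := fun k ↦
    ((hψ k).comp (hV.prodMk hb)).aestronglyMeasurable
  have hZ_le : ∀ k ω, ‖Z k ω‖ ≤ 1 := fun k ω ↦ by
    simp only [hZ, norm_mul, Real.norm_eq_abs, abs_boolSign, mul_one]
    split_ifs <;> simp
  have hsplit : (fun ω ↦ boolSign (b ω) * W (V ω) ω) =ᵐ[P] fun ω ↦ ∑ k ∈ s, Z k ω * W k ω := by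
    filter_upwards [hVs] with ω hω
    rw [sum_eq_single_of_mem _ hω fun k _ hk ↦ by simp [hZ, Ne.symm hk]]
    simp [hZ]
  rw [integral_congr_ae hsplit,
    integral_finsetSum _ fun k _ ↦ (hW k).bdd_mul (hZ_ae k) (.of_forall (hZ_le k))]
  refine sum_congr rfl fun k hk ↦ ?_
  exact ((hind k hk).comp (hψ k) measurable_id).integral_mul_eq_mul_integral (hZ_ae k)
    (hW k).aestronglyMeasurable

lemma integral_boolSign [IsProbabilityMeasure P] {b : Ω → Bool} (hb : Measurable b) :
    ∫ ω, boolSign (b ω) ∂P = 2 * P.real {ω | b ω = true} - 1 := by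
  have hset : MeasurableSet {ω | b ω = true} := hb (measurableSet_singleton true)
  have hsign : ∀ ω, boolSign (b ω) = 2 * {ω | b ω = true}.indicator 1 ω - 1 := by
    intro ω; cases h : b ω <;> norm_num [boolSign, h]
  simp_rw [hsign]
  rw [integral_sub (((integrable_const 1).indicator hset).const_mul 2) (integrable_const 1),
    integral_const_mul, integral_indicator_one hset]
  simp

lemma integral_ite_eq_mul_boolSign [IsProbabilityMeasure P] {V : Ω → ℕ} {b : Ω → Bool}
    (hV : Measurable V) (hb : Measurable b) (hVb : IndepFun V b P) (k : ℕ) :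
    ∫ ω, (if V ω = k then 1 else 0) * boolSign (b ω) ∂P
      = P.real {ω | V ω = k} * (2 * P.real {ω | b ω = true} - 1) := by
  have hset : MeasurableSet {ω | V ω = k} := hV (measurableSet_singleton k)
  have hφ : Measurable fun a : ℕ ↦ if a = k then (1 : ℝ) else 0 := measurable_of_countable _
  refine ((hVb.comp hφ measurable_boolSign).integral_mul_eq_mul_integral
    (hφ.comp hV).aestronglyMeasurable (measurable_boolSign.comp hb).aestronglyMeasurable).trans ?_
  rw [← integral_boolSign hb, ← integral_indicator_one hset]
  congr 2 with ω
  simp [Set.indicator_apply]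

end Integrals

section Walk

variable {Ω : Type*} (U : ℕ → Ω → ℕ) (η : ℕ → Ω → Bool)

/- The recursion of `X⁰` with its junk cases fixed (`step 0 = 1`, and `step n = 1` when
`U n ω ≥ n`), so that it is well founded and, unlike an arbitrary solution of the recursion,
measurable; it agrees with `X⁰` off the null event where some `U n ω ∉ [1, n - 1]`. -/
noncomputable def step : ℕ → Ω → ℝ
  | n, ω => if _h : 2 ≤ n ∧ U n ω < n then boolSign (η n ω) * step (U n ω) ω else 1
  decreasing_by exact _h.2

lemma step_eq (n : ℕ) (ω : Ω) : step U η n ω =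
    if 2 ≤ n ∧ U n ω < n then boolSign (η n ω) * step U η (U n ω) ω else 1 := by
  rw [step, dite_eq_ite]

lemma step_of_lt {n : ℕ} {ω : Ω} (hn : 2 ≤ n) (hU : U n ω < n) :
    step U η n ω = boolSign (η n ω) * step U η (U n ω) ω := by
  rw [step_eq, if_pos ⟨hn, hU⟩]

@[simp] lemma step_one (ω : Ω) : step U η 1 ω = 1 := by
  simp [step_eq]

@[simp] lemma abs_step (n : ℕ) (ω : Ω) : |step U η n ω| = 1 := by
  induction n using Nat.strong_induction_on with
  | _ n ih =>
    rw [step_eq]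
    split_ifs with h
    · rw [abs_mul, abs_boolSign, ih _ h.2, one_mul]
    · exact abs_one

lemma step_sq (n : ℕ) (ω : Ω) : step U η n ω ^ 2 = 1 := by
  rw [← sq_abs, abs_step, one_pow]

lemma eq_step_of_forall_mem_Icc {X : ℕ → Ω → ℝ} {ω : Ω} (h₁ : X 1 ω = 1)
    (hrec : ∀ n, 2 ≤ n → X n ω = if η n ω then X (U n ω) ω else -X (U n ω) ω)
    (hU : ∀ n, 2 ≤ n → U n ω ∈ Icc 1 (n - 1)) {n : ℕ} (hn : 1 ≤ n) :
    X n ω = step U η n ω := by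
  induction n using Nat.strong_induction_on with
  | _ n ih =>
    obtain rfl | hn₂ : n = 1 ∨ 2 ≤ n := by omega
    · simp [h₁]
    · obtain ⟨hU₁, hUn⟩ := mem_Icc.1 (hU n hn₂)
      rw [hrec n hn₂, step_of_lt U η hn₂ (by omega), ← ih _ (by omega) hU₁]
      cases η n ω <;> simp [boolSign]

lemma measurable_step {F : ℕ → MeasurableSpace Ω} (hF : Monotone F)
    (hU : ∀ n, Measurable[F n] (U n)) (hη : ∀ n, Measurable[F n] (η n)) (n : ℕ) :
    Measurable[F n] (step U η n) := by
  induction n using Nat.strong_induction_on with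
  | _ n ih =>
    by_cases hn : 2 ≤ n
    · have hcomp : step U η n = (fun p : Ω × ℕ × Bool ↦
          if p.2.1 < n then boolSign p.2.2 * step U η p.2.1 p.1 else 1) ∘
          fun ω ↦ (ω, U n ω, η n ω) := by
        funext ω; simp [step_eq U η n, hn]
      rw [hcomp]
      refine Measurable.comp ?_ (measurable_id.prodMk ((hU n).prodMk (hη n)))
      refine measurable_from_prod_countable_left fun ⟨k, c⟩ ↦ ?_
      by_cases hk : k < n
      · simpa [hk] using ((ih k hk).mono (hF hk.le) le_rfl).const_mul (boolSign c)
      · simp [hk]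
    · have hconst : step U η n = fun _ ↦ 1 := by funext ω; simp [step_eq, hn]
      rw [hconst]
      exact measurable_const

noncomputable def position (n : ℕ) (ω : Ω) : ℝ := ∑ k ∈ Icc 1 n, step U η k ω

lemma abs_position_le (n : ℕ) (ω : Ω) : |position U η n ω| ≤ n :=
  (abs_sum_le_sum_abs _ _).trans (by simp)

lemma position_succ (n : ℕ) (ω : Ω) :
    position U η (n + 1) ω = position U η n ω + step U η (n + 1) ω :=
  sum_Icc_succ_top (by omega) _

abbrev past (n : ℕ) : MeasurableSpace Ω :=
  ⨆ m ≤ n, (MeasurableSpace.comap (U m) inferInstance ⊔ MeasurableSpace.comap (η m) inferInstance)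

lemma past_mono : Monotone (past U η) := fun _ _ hab ↦ biSup_mono fun _ hm ↦ hm.trans hab

lemma measurable_past_left (n : ℕ) : Measurable[past U η n] (U n) :=
  (Measurable.of_comap_le le_rfl).mono (le_iSup₂_of_le n le_rfl le_sup_left) le_rfl

lemma measurable_past_right (n : ℕ) : Measurable[past U η n] (η n) :=
  (Measurable.of_comap_le le_rfl).mono (le_iSup₂_of_le n le_rfl le_sup_right) le_rfl

lemma measurable_step_past : ∀ n, Measurable[past U η n] (step U η n) :=
  measurable_step U η (past_mono U η) (measurable_past_left U η) (measurable_past_right U η)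

lemma measurable_position_past (n : ℕ) : Measurable[past U η n] (position U η n) :=
  Finset.measurable_sum _ fun k hk ↦
    (measurable_step_past U η k).mono (past_mono U η (mem_Icc.1 hk).2) le_rfl

end Walk

section Moments

variable {Ω : Type*} [MeasurableSpace Ω] {P : Measure Ω} {U : ℕ → Ω → ℕ} {η : ℕ → Ω → Bool}

lemma past_le (hmU : ∀ n, Measurable (U n)) (hmη : ∀ n, Measurable (η n)) (n : ℕ) :
    past U η n ≤ ‹MeasurableSpace Ω› :=
  iSup₂_le fun m _ ↦ sup_le (hmU m).comap_le (hmη m).comap_le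

lemma indep_past (hmU : ∀ n, Measurable (U n)) (hmη : ∀ n, Measurable (η n))
    (hU : iIndepFun U P) (hη : iIndepFun η P)
    (hUη : Indep (⨆ n, MeasurableSpace.comap (U n) inferInstance)
      (⨆ n, MeasurableSpace.comap (η n) inferInstance) P) (n : ℕ) :
    Indep (MeasurableSpace.comap (U (n + 1)) inferInstance ⊔
      MeasurableSpace.comap (η (n + 1)) inferInstance) (past U η n) P := by
  set m : ℕ ⊕ ℕ → MeasurableSpace Ω :=
    Sum.elim (fun k ↦ MeasurableSpace.comap (U k) inferInstance)
      (fun k ↦ MeasurableSpace.comap (η k) inferInstance)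
  have hm : iIndep m P :=
    ((iIndepFun_iff_iIndep _ _ _).1 hU).sumElim ((iIndepFun_iff_iIndep _ _ _).1 hη) hUη
  have hle : ∀ p, m p ≤ ‹_› := Sum.forall.2 ⟨fun k ↦ (hmU k).comap_le, fun k ↦ (hmη k).comap_le⟩
  have hdisj : Disjoint {p : ℕ ⊕ ℕ | p.elim id id = n + 1} {p | p.elim id id ≤ n} :=
    Set.disjoint_left.2 fun p h₁ h₂ ↦ by simp_all
  refine indep_of_indep_of_le_right (indep_of_indep_of_le_left
    (indep_iSup_of_disjoint hle hm hdisj) ?_) ?_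
  · exact sup_le (le_biSup m (i := .inl (n + 1)) rfl) (le_biSup m (i := .inr (n + 1)) rfl)
  · exact iSup₂_le fun k hk ↦ sup_le (le_biSup m (i := .inl k) hk) (le_biSup m (i := .inr k) hk)

variable [IsProbabilityMeasure P]

lemma ae_forall_mem_Icc (hmU : ∀ n, Measurable (U n))
    (hUunif : ∀ n, 2 ≤ n → ∀ k ∈ Icc 1 (n - 1), P {ω | U n ω = k} = ((n - 1 : ℕ) : ℝ≥0∞)⁻¹) :
    ∀ᵐ ω ∂P, ∀ n, 2 ≤ n → U n ω ∈ Icc 1 (n - 1) := by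
  refine ae_all_iff.2 fun n ↦ ?_
  by_cases hn : 2 ≤ n
  · filter_upwards [ae_mem_of_measure_eq_inv_card (hmU n) (s := Icc 1 (n - 1))
      (nonempty_Icc.2 (by omega)) fun k hk ↦ by
        rw [hUunif n hn k hk, Nat.card_Icc, Nat.add_sub_cancel]] with ω hω _ using hω
  · exact .of_forall fun _ h ↦ absurd h hn

lemma integrable_position_mul_step (hmU : ∀ n, Measurable (U n))
    (hmη : ∀ n, Measurable (η n)) (n k : ℕ) :
    Integrable (fun ω ↦ position U η n ω * step U η k ω) P := by
  have hmeas : Measurable fun ω ↦ position U η n ω * step U η k ω :=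
    ((measurable_position_past U η n).mono (past_le hmU hmη n) le_rfl).mul
      ((measurable_step_past U η k).mono (past_le hmU hmη k) le_rfl)
  refine .of_bound hmeas.aestronglyMeasurable n (.of_forall fun ω ↦ ?_)
  simpa [abs_mul] using abs_position_le U η n ω

lemma integral_position_mul_step_succ (hmU : ∀ n, Measurable (U n))
    (hmη : ∀ n, Measurable (η n)) {n : ℕ} (hn : 1 ≤ n)
    (hind : Indep (MeasurableSpace.comap (U (n + 1)) inferInstance ⊔
      MeasurableSpace.comap (η (n + 1)) inferInstance) (past U η n) P)
    (hUη : IndepFun (U (n + 1)) (η (n + 1)) P)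
    (hU : ∀ k ∈ Icc 1 n, P {ω | U (n + 1) ω = k} = (n : ℝ≥0∞)⁻¹)
    {r : ℝ} (hr : 0 ≤ r) (hη : P {ω | η (n + 1) ω = true} = ENNReal.ofReal r) :
    ∫ ω, position U η n ω * step U η (n + 1) ω ∂P
      = (2 * r - 1) / n * ∫ ω, position U η n ω ^ 2 ∂P := by
  have hUs : ∀ᵐ ω ∂P, U (n + 1) ω ∈ Icc 1 n :=
    ae_mem_of_measure_eq_inv_card (hmU _) (nonempty_Icc.2 hn) (by simpa using hU)
  have hsel : (fun ω ↦ position U η n ω * step U η (n + 1) ω) =ᵐ[P]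
      fun ω ↦ boolSign (η (n + 1) ω) * (position U η n ω * step U η (U (n + 1) ω) ω) := by
    filter_upwards [hUs] with ω hω
    rw [step_of_lt U η (by omega) (by simp at hω; omega)]
    ring
  have hpair : ∀ k ∈ Icc 1 n, IndepFun (fun ω ↦ (U (n + 1) ω, η (n + 1) ω))
      (fun ω ↦ position U η n ω * step U η k ω) P := fun k hk ↦
    indep_of_indep_of_le_right (indep_of_indep_of_le_left hind
      ((Measurable.of_comap_le le_sup_left).prodMk (Measurable.of_comap_le le_sup_right)).comap_le)
      ((measurable_position_past U η n).mul ((measurable_step_past U η k).mono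
        (past_mono U η (mem_Icc.1 hk).2) le_rfl)).comap_le
  have hcoef : ∀ k ∈ Icc 1 n,
      ∫ ω, (if U (n + 1) ω = k then 1 else 0) * boolSign (η (n + 1) ω) ∂P = (2 * r - 1) / n := by
    intro k hk
    rw [integral_ite_eq_mul_boolSign (hmU _) (hmη _) hUη, measureReal_def, measureReal_def,
      hU k hk, hη, ENNReal.toReal_inv, ENNReal.toReal_natCast, ENNReal.toReal_ofReal hr]
    ring
  rw [integral_congr_ae hsel, integral_boolSign_mul_eq_sum (hmU _) (hmη _) hUs
      (integrable_position_mul_step hmU hmη n) hpair,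
    sum_congr rfl fun k hk ↦ by rw [hcoef k hk], ← mul_sum,
    ← integral_finsetSum _ fun k _ ↦ integrable_position_mul_step hmU hmη n k]
  congr 2 with ω
  rw [← mul_sum, sq, position]

lemma integral_position_sq_succ (hmU : ∀ n, Measurable (U n)) (hmη : ∀ n, Measurable (η n))
    {n : ℕ} (hn : 1 ≤ n) {r : ℝ}
    (hcross : ∫ ω, position U η n ω * step U η (n + 1) ω ∂P
      = (2 * r - 1) / n * ∫ ω, position U η n ω ^ 2 ∂P) :
    ∫ ω, position U η (n + 1) ω ^ 2 ∂P
      = ((n + 4 * r - 2) / n) * ∫ ω, position U η n ω ^ 2 ∂P + 1 := by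
  have hn₀ : (n : ℝ) ≠ 0 := by positivity
  have hpos : Measurable (position U η n) :=
    (measurable_position_past U η n).mono (past_le hmU hmη n) le_rfl
  have hsq : Integrable (fun ω ↦ position U η n ω ^ 2) P :=
    .of_bound (hpos.pow_const 2).aestronglyMeasurable (n ^ 2) <| .of_forall fun ω ↦ by
      simpa using pow_le_pow_left₀ (abs_nonneg _) (abs_position_le U η n ω) 2
  have hcross_int := (integrable_position_mul_step (P := P) hmU hmη n (n + 1)).const_mul 2
  calc ∫ ω, position U η (n + 1) ω ^ 2 ∂P
      = ∫ ω, position U η n ω ^ 2 + 2 * (position U η n ω * step U η (n + 1) ω) + 1 ∂P := by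
        congr with ω
        rw [position_succ]
        linear_combination step_sq U η (n + 1) ω
    _ = ∫ ω, position U η n ω ^ 2 ∂P
          + 2 * ∫ ω, position U η n ω * step U η (n + 1) ω ∂P + 1 := by
        rw [integral_add (by exact hsq.add hcross_int) (integrable_const 1),
          integral_add hsq hcross_int, integral_const_mul]
        simp
    _ = ((n + 4 * r - 2) / n) * ∫ ω, position U η n ω ^ 2 ∂P + 1 := by
        rw [hcross]
        field_simp
        ring

end Moments

end ElephantRandomWalk

theorem stmt13_general
    {Ω : Type*} [MeasurableSpace Ω] (P : Measure Ω) [IsProbabilityMeasure P]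
    (r : ℝ) (hr : 0 ≤ r)
    (U : ℕ → Ω → ℕ) (η : ℕ → Ω → Bool)
    (hmU : ∀ n, Measurable (U n)) (hmη : ∀ n, Measurable (η n))
    -- U_n independent, uniform on {1,…,n−1}
    (hUindep : iIndepFun U P)
    (hUunif : ∀ n, 2 ≤ n → ∀ k ∈ Finset.Icc 1 (n-1),
      P {ω | U n ω = k} = (((n - 1 : ℕ) : ENNReal))⁻¹)
    -- η i.i.d. Bernoulli(r)
    (hηindep : iIndepFun η P)
    (hηber : ∀ n, 2 ≤ n → P {ω | η n ω = true} = ENNReal.ofReal r)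
    -- (U_n) and (η_n) independent of each other
    (hmut : Indep
      (⨆ n, MeasurableSpace.comap (U n) inferInstance)
      (⨆ n, MeasurableSpace.comap (η n) inferInstance) P)
    -- the elephant random walk with memory parameter r
    (X0 : ℕ → Ω → ℝ) (T0 : ℕ → Ω → ℝ)
    (hX01 : ∀ ω, X0 1 ω = 1)
    (hX0rec : ∀ n, 2 ≤ n → ∀ ω, X0 n ω =
      if η n ω then X0 (U n ω) ω else -X0 (U n ω) ω)
    (hT0 : ∀ n ω, T0 n ω = ∑ k ∈ Finset.Icc 1 n, X0 k ω)
    :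
    (∀ n : ℕ, 1 ≤ n →
      ∫ ω, (T0 n ω) ^ 2 ∂P
        = ∑ k ∈ Finset.Icc 1 n, ∏ j ∈ Finset.Icc k (n-1), (((j : ℝ) + 4*r - 2) / j)) ∧
    (∀ n : ℕ, 1 ≤ n →
      ∫ ω, (T0 (n+1) ω) ^ 2 ∂P
        = (((n : ℝ) + 4*r - 2) / n) * ∫ ω, (T0 n ω) ^ 2 ∂P + 1) := by
  open ElephantRandomWalk in
  have hT : ∀ n, ∫ ω, T0 n ω ^ 2 ∂P = ∫ ω, position U η n ω ^ 2 ∂P := fun n ↦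
    integral_congr_ae <| by
      filter_upwards [ae_forall_mem_Icc hmU hUunif] with ω hω
      rw [hT0, position, sum_congr rfl fun k hk ↦
        eq_step_of_forall_mem_Icc U η (hX01 ω) (hX0rec · · ω) hω (mem_Icc.1 hk).1]
  have hUη : ∀ n, IndepFun (U n) (η n) P := fun n ↦
    (IndepFun_iff_Indep _ _ _).2 <| indep_of_indep_of_le_right
      (indep_of_indep_of_le_left hmut (le_iSup_of_le n le_rfl)) (le_iSup_of_le n le_rfl)
  have hrec : ∀ n, 1 ≤ n → ∫ ω, position U η (n + 1) ω ^ 2 ∂P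
      = ((n + 4 * r - 2) / n) * ∫ ω, position U η n ω ^ 2 ∂P + 1 := fun n hn ↦
    integral_position_sq_succ hmU hmη hn <| integral_position_mul_step_succ hmU hmη hn
      (indep_past hmU hmη hUindep hηindep hmut n) (hUη (n + 1))
      (by simpa using hUunif (n + 1) (by omega)) hr (hηber (n + 1) (by omega))
  refine ⟨fun n hn ↦ ?_, fun n hn ↦ by rw [hT, hT, hrec n hn]⟩
  rw [hT]
  refine sum_prod_Icc_of_succ_eq_mul_add_one (a := fun n ↦ ∫ ω, position U η n ω ^ 2 ∂P)
    (c := fun j ↦ (j + 4 * r - 2) / j) ?_ hrec n hn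
  simp [position]

theorem stmt13
    {Ω : Type*} [MeasurableSpace Ω] (P : Measure Ω) [IsProbabilityMeasure P]
    (r : ℝ) (hr : 0 ≤ r) (hr1 : r ≤ 1)
    (U : ℕ → Ω → ℕ) (η : ℕ → Ω → Bool)
    (hmU : ∀ n, Measurable (U n)) (hmη : ∀ n, Measurable (η n))
    -- U_n independent, uniform on {1,…,n−1}
    (hUindep : iIndepFun U P)
    (hUunif : ∀ n, 2 ≤ n → ∀ k ∈ Finset.Icc 1 (n-1),
      P {ω | U n ω = k} = (((n - 1 : ℕ) : ENNReal))⁻¹)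
    -- η i.i.d. Bernoulli(r)
    (hηindep : iIndepFun η P)
    (hηber : ∀ n, 2 ≤ n → P {ω | η n ω = true} = ENNReal.ofReal r)
    -- (U_n) and (η_n) independent of each other
    (hmut : Indep
      (⨆ n, MeasurableSpace.comap (U n) inferInstance)
      (⨆ n, MeasurableSpace.comap (η n) inferInstance) P)
    -- the elephant random walk with memory parameter r
    (X0 : ℕ → Ω → ℝ) (T0 : ℕ → Ω → ℝ)
    (hX01 : ∀ ω, X0 1 ω = 1)
    (hX0rec : ∀ n, 2 ≤ n → ∀ ω, X0 n ω =
      if η n ω then X0 (U n ω) ω else -X0 (U n ω) ω)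
    (hT0 : ∀ n ω, T0 n ω = ∑ k ∈ Finset.Icc 1 n, X0 k ω)
    :
    (∀ n : ℕ, 1 ≤ n →
      ∫ ω, (T0 n ω) ^ 2 ∂P
        = ∑ k ∈ Finset.Icc 1 n, ∏ j ∈ Finset.Icc k (n-1), (((j : ℝ) + 4*r - 2) / j)) ∧
    (∀ n : ℕ, 1 ≤ n →
      ∫ ω, (T0 (n+1) ω) ^ 2 ∂P
        = (((n : ℝ) + 4*r - 2) / n) * ∫ ω, (T0 n ω) ^ 2 ∂P + 1) :=
  stmt13_general P r hr U η hmU hmη hUindep hUunif hηindep hηber hmut X0 T0 hX01 hX0rec hT0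
end

section
/- Almost surely, for every n ≥ 1, T_n = Σ_{k=1}^n W_{nk}·ξ_k, where T_n is the unbalanced step-reinforced random walk and W_{nk} are the percolation cluster weights constructed from the same randomness (U_n), (ε_n), (η_n). -/
/-! Unrolling the recursion for `X` shows `X k = V k · ξ (rt k)`: each step copies `X` from an
earlier vertex, with the sign recorded in `V`, until a root `rt k` is reached, where a fresh `ξ`
is drawn. Grouping the terms of `T n` by the root of their cluster gives `∑ j, W n j · ξ j`; the
guard in `W` is harmless because every `rt k` is a root. The only probabilistic input is that
`U n ∈ {1, …, n - 1}` almost surely, which makes the recursions well founded. -/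

open MeasureTheory ProbabilityTheory Filter Finset Topology ENNReal
open scoped Classical

lemma ae_mem_of_sum_measure_eq_one {Ω α : Type*} [MeasurableSpace Ω] [MeasurableSpace α]
    [MeasurableSingletonClass α] {P : Measure Ω} [IsProbabilityMeasure P] {f : Ω → α}
    (hf : Measurable f) {s : Finset α} (hs : ∑ a ∈ s, P {ω | f ω = a} = 1) :
    ∀ᵐ ω ∂P, f ω ∈ s := by
  have hpre : P (f ⁻¹' s) = 1 := by
    rw [← sum_measure_preimage_singleton s fun a _ => hf (measurableSet_singleton a)]
    exact hs
  exact ae_iff.2 <| (prob_compl_eq_zero_iff (hf s.measurableSet)).2 hpre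

lemma ae_mem_Icc_of_uniform {Ω : Type*} [MeasurableSpace Ω] {P : Measure Ω}
    [IsProbabilityMeasure P] {f : Ω → ℕ} (hf : Measurable f) {m : ℕ} (hm : m ≠ 0)
    (hunif : ∀ k ∈ Icc 1 m, P {ω | f ω = k} = (m : ℝ≥0∞)⁻¹) :
    ∀ᵐ ω ∂P, f ω ∈ Icc 1 m := by
  refine ae_mem_of_sum_measure_eq_one hf ?_
  rw [sum_congr rfl hunif, sum_const, Nat.card_Icc, add_tsub_cancel_right, nsmul_eq_mul]
  exact ENNReal.mul_inv_cancel (by exact_mod_cast hm) (natCast_ne_top m)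

section ClusterRepresentation

variable {R : Type*} [Ring R] {u : ℕ → ℕ} {ε η : ℕ → Bool}

lemma eq_sign_mul_at_root_of_recursion {ξ X V : ℕ → R} {rt : ℕ → ℕ}
    (hu : ∀ n, 2 ≤ n → u n ∈ Icc 1 (n - 1))
    (hX1 : X 1 = ξ 1)
    (hX : ∀ n, 2 ≤ n → X n = if ε n then (if η n then X (u n) else -X (u n)) else ξ n)
    (hrt1 : rt 1 = 1) (hrt : ∀ n, 2 ≤ n → rt n = if ε n then rt (u n) else n)
    (hV1 : V 1 = 1)
    (hV : ∀ n, 2 ≤ n → V n = if ε n then (if η n then V (u n) else -V (u n)) else 1) :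
    ∀ k, 1 ≤ k → X k = V k * ξ (rt k) := by
  intro k hk
  induction k using Nat.strong_induction_on with
  | _ k ih =>
    obtain rfl | hk2 : k = 1 ∨ 2 ≤ k := by omega
    · rw [hX1, hV1, hrt1, one_mul]
    have hu' := mem_Icc.1 (hu k hk2)
    have ihu := ih (u k) (by omega) hu'.1
    rw [hX k hk2, hV k hk2, hrt k hk2]
    cases ε k <;> cases η k <;> simp [ihu]

lemma root_mem_Icc_and_isRoot_of_recursion {rt : ℕ → ℕ}
    (hu : ∀ n, 2 ≤ n → u n ∈ Icc 1 (n - 1))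
    (hrt1 : rt 1 = 1) (hrt : ∀ n, 2 ≤ n → rt n = if ε n then rt (u n) else n) :
    ∀ k, 1 ≤ k → rt k ∈ Icc 1 k ∧ (rt k = 1 ∨ ε (rt k) = false) := by
  intro k hk
  induction k using Nat.strong_induction_on with
  | _ k ih =>
    obtain rfl | hk2 : k = 1 ∨ 2 ≤ k := by omega
    · simp [hrt1]
    have hu' := mem_Icc.1 (hu k hk2)
    obtain ⟨hmem, hroot⟩ := ih (u k) (by omega) hu'.1
    rw [hrt k hk2]
    cases hε : ε k
    · simp [hε, hk]
    · have hle := (mem_Icc.1 hmem).2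
      simp only [if_true]
      exact ⟨mem_Icc.2 ⟨(mem_Icc.1 hmem).1, by omega⟩, hroot⟩

end ClusterRepresentation

lemma sum_mul_comp_eq_sum_fiberwise {ι R : Type*} [DecidableEq ι] [NonUnitalNonAssocSemiring R]
    {s : Finset ι} {g : ι → ι} (hg : ∀ i ∈ s, g i ∈ s) (v x : ι → R) :
    ∑ i ∈ s, v i * x (g i) = ∑ j ∈ s, (∑ i ∈ s, if g i = j then v i else 0) * x j := by
  rw [← sum_fiberwise_of_maps_to hg]
  refine sum_congr rfl fun j _ => ?_
  rw [← sum_filter, sum_mul]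
  exact sum_congr rfl fun i hi => by rw [(mem_filter.1 hi).2]

theorem stmt18_general
    {Ω : Type*} [MeasurableSpace Ω] (P : Measure Ω) [IsProbabilityMeasure P]
    (ξ : ℕ → Ω → ℝ) (U : ℕ → Ω → ℕ) (ε η : ℕ → Ω → Bool)
    (hmU : ∀ n, Measurable (U n))
    -- U_n independent, uniform on {1,…,n−1}
    (hUunif : ∀ n, 2 ≤ n → ∀ k ∈ Finset.Icc 1 (n-1),
      P {ω | U n ω = k} = (((n - 1 : ℕ) : ENNReal))⁻¹)
    -- the unbalanced step-reinforced random walk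
    (X : ℕ → Ω → ℝ) (T : ℕ → Ω → ℝ)
    (hX1 : ∀ ω, X 1 ω = ξ 1 ω)
    (hXrec : ∀ n, 2 ≤ n → ∀ ω, X n ω =
      if ε n ω then (if η n ω then X (U n ω) ω else -X (U n ω) ω) else ξ n ω)
    (hT : ∀ n ω, T n ω = ∑ k ∈ Finset.Icc 1 n, X k ω)
    -- rt i ω is the root of the percolation cluster containing vertex i
    (rt : ℕ → Ω → ℕ)
    (hrt1 : ∀ ω, rt 1 ω = 1)
    (hrt : ∀ n, 2 ≤ n → ∀ ω, rt n ω = if ε n ω then rt (U n ω) ω else n)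
    -- V i ω is the ±1 value assigned to vertex i
    (V : ℕ → Ω → ℝ)
    (hV1 : ∀ ω, V 1 ω = 1)
    (hV : ∀ n, 2 ≤ n → ∀ ω, V n ω =
      if ε n ω then (if η n ω then V (U n ω) ω else -V (U n ω) ω) else 1)
    -- W n j ω : sum of the values over the cluster rooted at j (0 if j is not a root)
    (W : ℕ → ℕ → Ω → ℝ)
    (hW : ∀ n j ω, W n j ω =
      if j = 1 ∨ ε j ω = false
      then ∑ i ∈ Finset.Icc 1 n, (if rt i ω = j then V i ω else 0) else 0) :
    ∀ᵐ ω ∂P, ∀ n : ℕ, 1 ≤ n →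
      T n ω = ∑ k ∈ Finset.Icc 1 n, W n k ω * ξ k ω := by
  have hU : ∀ᵐ ω ∂P, ∀ n, 2 ≤ n → U n ω ∈ Icc 1 (n - 1) := by
    refine ae_all_iff.2 fun n => ?_
    by_cases hn : 2 ≤ n
    · filter_upwards [ae_mem_Icc_of_uniform (hmU n) (by omega) (hUunif n hn)] with ω hω
      exact fun _ => hω
    · exact .of_forall fun _ h => absurd h hn
  filter_upwards [hU] with ω hu n _
  have hroot := root_mem_Icc_and_isRoot_of_recursion hu (hrt1 ω) (hrt · · ω)
  have hrt_mem : ∀ i ∈ Icc 1 n, rt i ω ∈ Icc 1 n := fun i hi =>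
    Icc_subset_Icc_right (mem_Icc.1 hi).2 (hroot i (mem_Icc.1 hi).1).1
  have hW_cluster : ∀ j, W n j ω = ∑ i ∈ Icc 1 n, if rt i ω = j then V i ω else 0 := by
    intro j
    rw [hW]
    split_ifs with hj
    · rfl
    · refine (sum_eq_zero fun i hi => if_neg fun hij => hj ?_).symm
      exact hij ▸ (hroot i (mem_Icc.1 hi).1).2
  rw [hT, sum_congr rfl fun k hk => eq_sign_mul_at_root_of_recursion hu (hX1 ω) (hXrec · · ω)
      (hrt1 ω) (hrt · · ω) (hV1 ω) (hV · · ω) k (mem_Icc.1 hk).1,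
    sum_mul_comp_eq_sum_fiberwise hrt_mem (V · ω) (ξ · ω)]
  simp only [hW_cluster]

theorem stmt18
    {Ω : Type*} [MeasurableSpace Ω] (P : Measure Ω) [IsProbabilityMeasure P]
    (p r : ℝ) (hp : 0 ≤ p) (hp1 : p ≤ 1) (hr : 0 ≤ r) (hr1 : r ≤ 1)
    (ξ : ℕ → Ω → ℝ) (U : ℕ → Ω → ℕ) (ε η : ℕ → Ω → Bool)
    (hmξ : ∀ n, Measurable (ξ n)) (hmU : ∀ n, Measurable (U n))
    (hmε : ∀ n, Measurable (ε n)) (hmη : ∀ n, Measurable (η n))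
    -- ξ i.i.d.
    (hξindep : iIndepFun ξ P)
    (hξid : ∀ n, IdentDistrib (ξ n) (ξ 1) P P)
    -- U_n independent, uniform on {1,…,n−1}
    (hUindep : iIndepFun U P)
    (hUunif : ∀ n, 2 ≤ n → ∀ k ∈ Finset.Icc 1 (n-1),
      P {ω | U n ω = k} = (((n - 1 : ℕ) : ENNReal))⁻¹)
    -- ε i.i.d. Bernoulli(p)
    (hεindep : iIndepFun ε P)
    (hεber : ∀ n, 2 ≤ n → P {ω | ε n ω = true} = ENNReal.ofReal p)
    -- η i.i.d. Bernoulli(r)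
    (hηindep : iIndepFun η P)
    (hηber : ∀ n, 2 ≤ n → P {ω | η n ω = true} = ENNReal.ofReal r)
    -- the four sequences are mutually independent
    (hmut : iIndep
      ![⨆ n, MeasurableSpace.comap (ξ n) inferInstance,
        ⨆ n, MeasurableSpace.comap (U n) inferInstance,
        ⨆ n, MeasurableSpace.comap (ε n) inferInstance,
        ⨆ n, MeasurableSpace.comap (η n) inferInstance] P)
    -- the unbalanced step-reinforced random walk
    (X : ℕ → Ω → ℝ) (T : ℕ → Ω → ℝ)
    (hX1 : ∀ ω, X 1 ω = ξ 1 ω)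
    (hXrec : ∀ n, 2 ≤ n → ∀ ω, X n ω =
      if ε n ω then (if η n ω then X (U n ω) ω else -X (U n ω) ω) else ξ n ω)
    (hT : ∀ n ω, T n ω = ∑ k ∈ Finset.Icc 1 n, X k ω)
    -- rt i ω is the root of the percolation cluster containing vertex i
    (rt : ℕ → Ω → ℕ)
    (hrt1 : ∀ ω, rt 1 ω = 1)
    (hrt : ∀ n, 2 ≤ n → ∀ ω, rt n ω = if ε n ω then rt (U n ω) ω else n)
    -- V i ω is the ±1 value assigned to vertex i
    (V : ℕ → Ω → ℝ)
    (hV1 : ∀ ω, V 1 ω = 1)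
    (hV : ∀ n, 2 ≤ n → ∀ ω, V n ω =
      if ε n ω then (if η n ω then V (U n ω) ω else -V (U n ω) ω) else 1)
    -- W n j ω : sum of the values over the cluster rooted at j (0 if j is not a root)
    (W : ℕ → ℕ → Ω → ℝ)
    (hW : ∀ n j ω, W n j ω =
      if j = 1 ∨ ε j ω = false
      then ∑ i ∈ Finset.Icc 1 n, (if rt i ω = j then V i ω else 0) else 0) :
    ∀ᵐ ω ∂P, ∀ n : ℕ, 1 ≤ n →
      T n ω = ∑ k ∈ Finset.Icc 1 n, W n k ω * ξ k ω :=
  stmt18_general P ξ U ε η hmU hUunif X T hX1 hXrec hT rt hrt1 hrt V hV1 hV W hW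
end
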